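/- Let (P, \mathcal{I}) be a poset matroid and w : P → ℝ≥0 an order-preserving weight function. Then every output S of the greedy algorithm PGREEDY satisfies w(S) = max{ w(A) : A ∈ \mathcal{I} }. -/

import Mathlib

open Finset

def IsUpset {P : Type*} [PartialOrder P] (S : Finset P) : Prop :=
  ∀ ⦃x⦄, x ∈ S → ∀ ⦃y⦄, x ≤ y → y ∈ S

def MaxIn {P : Type*} [PartialOrder P] (T : Finset P) (y : P) : Prop :=
  y ∈ T ∧ ∀ z ∈ T, y ≤ z → z = y

def PosetMatroid {P : Type*} [PartialOrder P] [DecidableEq P]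
    (I : Set (Finset P)) : Prop :=
  I.Nonempty ∧ (∀ S ∈ I, IsUpset S) ∧
  (∀ X Y : Finset P, Y ∈ I → IsUpset X → X ⊆ Y → X ∈ I) ∧
  (∀ X ∈ I, ∀ Y ∈ I, X.card < Y.card →
      ∃ y, MaxIn (Y \ X) y ∧ insert y X ∈ I)

open Classical in
/-- One step of PGREEDY: add `m` to the current set `S` if the result is
independent, otherwise discard `m`. -/
noncomputable def pgreedyStep {P : Type*} [DecidableEq P]
    (I : Set (Finset P)) (S : Finset P) (m : P) : Finset P :=
  if insert m S ∈ I then insert m S else S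

/-- The output of PGREEDY when the elements of `P` are examined in the order
given by the list `l`. -/
noncomputable def pgreedy {P : Type*} [DecidableEq P]
    (I : Set (Finset P)) (l : List P) : Finset P :=
  l.foldl (pgreedyStep I) ∅

/-- `l` is an admissible examination order for PGREEDY: it enumerates `P`
without repetition and, at each step, the examined element is a maximal
element of maximum weight among the remaining ones. -/
def IsGreedyOrder {P : Type*} [Fintype P] [PartialOrder P] [DecidableEq P]
    (w : P → ℝ) (l : List P) : Prop :=
  l.Nodup ∧ (∀ x : P, x ∈ l) ∧
  ∀ i : ℕ, ∀ hi : i < l.length,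
    MaxIn (l.drop i).toFinset (l.get ⟨i, hi⟩) ∧
    ∀ z, MaxIn (l.drop i).toFinset z → w z ≤ w (l.get ⟨i, hi⟩)

/-!
Write `Tₖ` for the first `k` examined elements and `Sₖ` for the greedy set built from them. Every
`Tₖ` is an up-set, and if `Sₖ ∪ {y}` is independent for some `y = l[j] ∈ Tₖ`, then `y` was taken
at step `j`: `Sⱼ ∪ {y}` is an up-set (all elements above `y` were examined earlier) contained in
`Sₖ ∪ {y}`. With the exchange axiom for `Sₖ` and `A ∩ Tₖ` this gives `|A ∩ Tₖ| ≤ |Sₖ|` for every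
`k`. Weights decrease along the examination order, so an Abel summation turns these prefix
inequalities into `w(A) ≤ w(S)`.
-/

-- `c` counts the surplus of `q`-elements over `p`-elements in an already processed prefix; each of
-- them weighs at least `M`, so it pays for one later `p`-element.
theorem sum_map_filter_le_add_of_countP_le {α : Type*} (v : α → ℝ) (p q : α → Bool) :
    ∀ {L : List α} {c M : ℝ}, 0 ≤ c → 0 ≤ M → (∀ x ∈ L, 0 ≤ v x) → (∀ x ∈ L, v x ≤ M) →
      L.Pairwise (fun a b => v b ≤ v a) →
      (∀ L₁ L₂, L = L₁ ++ L₂ → (L₁.countP p : ℝ) ≤ c + L₁.countP q) →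
      ((L.filter p).map v).sum ≤ c * M + ((L.filter q).map v).sum
  | [], c, M, hc, hM, _, _, _, _ => by simpa using mul_nonneg hc hM
  | a :: L, c, M, hc, hM0, hv0, hvM, hanti, hcount => by
    rw [List.pairwise_cons] at hanti
    have hhead := hcount [a] L rfl
    have ih := sum_map_filter_le_add_of_countP_le v p q
      (c := c + (if q a then 1 else 0) - (if p a then 1 else 0)) (M := v a)
      (by simp only [List.countP_singleton] at hhead; push_cast at hhead; linarith)
      (hv0 a List.mem_cons_self) (fun x hx => hv0 x (List.mem_cons_of_mem a hx)) hanti.1 hanti.2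
      (fun L₁ L₂ h => by
        have := hcount (a :: L₁) L₂ (by rw [h, List.cons_append])
        simp only [List.countP_cons] at this
        push_cast at this
        linarith)
    have hcM : c * v a ≤ c * M := mul_le_mul_of_nonneg_left (hvM a List.mem_cons_self) hc
    cases hp : p a <;> cases hq : q a <;> simp [hp, hq] at ih ⊢ <;> linarith

theorem sum_map_filter_le_of_countP_le {α : Type*} (v : α → ℝ) (p q : α → Bool) {L : List α}
    (hv0 : ∀ x ∈ L, 0 ≤ v x) (hanti : L.Pairwise (fun a b => v b ≤ v a))
    (hcount : ∀ L₁ L₂, L = L₁ ++ L₂ → L₁.countP p ≤ L₁.countP q) :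
    ((L.filter p).map v).sum ≤ ((L.filter q).map v).sum := by
  cases L with
  | nil => simp
  | cons a L =>
    have hva : ∀ x ∈ a :: L, v x ≤ v a := by
      intro x hx
      rcases List.mem_cons.1 hx with rfl | hx
      exacts [le_rfl, (List.pairwise_cons.1 hanti).1 x hx]
    simpa using sum_map_filter_le_add_of_countP_le v p q le_rfl (hv0 a List.mem_cons_self) hv0 hva
      hanti fun L₁ L₂ h => by simpa using (hcount L₁ L₂ h)

theorem List.pairwise_of_forall_eq_append_cons {α : Type*} {r : α → α → Prop} :
    ∀ {l : List α}, (∀ L₁ y R, l = L₁ ++ y :: R → ∀ x ∈ R, r y x) → l.Pairwise r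
  | [], _ => .nil
  | a :: t, h => .cons (h [] a t rfl) (pairwise_of_forall_eq_append_cons fun L₁ y R e =>
      h (a :: L₁) y R (by rw [e, cons_append]))

theorem maxIn_of_maximal {P : Type*} [PartialOrder P] {T : Finset P} {y : P}
    (h : Maximal (· ∈ T) y) : MaxIn T y :=
  ⟨h.1, fun _ hz hyz => le_antisymm (h.2 hz hyz) hyz⟩

section Greedy

variable {P : Type*} [DecidableEq P] {I : Set (Finset P)}

theorem PosetMatroid.empty_mem [PartialOrder P] (hI : PosetMatroid I) : ∅ ∈ I := by
  obtain ⟨⟨Y, hY⟩, -, hdown, -⟩ := hI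
  exact hdown ∅ Y hY (by simp [IsUpset]) (empty_subset Y)

theorem pgreedyStep_eq_insert {S : Finset P} {m : P} (h : insert m S ∈ I) :
    pgreedyStep I S m = insert m S := by
  simp [pgreedyStep, h]

theorem foldl_pgreedyStep_mem {S : Finset P} (hS : S ∈ I) (L : List P) :
    L.foldl (pgreedyStep I) S ∈ I := by
  induction L generalizing S with
  | nil => exact hS
  | cons m L ih =>
    refine ih ?_
    unfold pgreedyStep
    split_ifs with h
    exacts [h, hS]

theorem subset_foldl_pgreedyStep (S : Finset P) (L : List P) :
    S ⊆ L.foldl (pgreedyStep I) S := by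
  induction L generalizing S with
  | nil => exact subset_rfl
  | cons m L ih =>
    refine subset_trans ?_ (ih _)
    unfold pgreedyStep
    split_ifs
    exacts [subset_insert m S, subset_rfl]

theorem foldl_pgreedyStep_subset (S : Finset P) (L : List P) :
    L.foldl (pgreedyStep I) S ⊆ S ∪ L.toFinset := by
  induction L generalizing S with
  | nil => simp
  | cons m L ih =>
    refine (ih _).trans ?_
    unfold pgreedyStep
    split_ifs <;> intro x <;> simp only [mem_union, mem_insert, List.toFinset_cons] <;> tauto

theorem pgreedy_append (L₁ L₂ : List P) :
    pgreedy I (L₁ ++ L₂) = L₂.foldl (pgreedyStep I) (pgreedy I L₁) :=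
  List.foldl_append

theorem pgreedy_mem (h : ∅ ∈ I) (L : List P) : pgreedy I L ∈ I :=
  foldl_pgreedyStep_mem h L

theorem pgreedy_subset (L : List P) : pgreedy I L ⊆ L.toFinset := by
  simpa [pgreedy] using foldl_pgreedyStep_subset (I := I) ∅ L

theorem pgreedy_subset_append (L₁ L₂ : List P) : pgreedy I L₁ ⊆ pgreedy I (L₁ ++ L₂) := by
  rw [pgreedy_append]
  exact subset_foldl_pgreedyStep _ _

theorem pgreedy_append_inter {L₁ L₂ : List P} (h : (L₁ ++ L₂).Nodup) :
    pgreedy I (L₁ ++ L₂) ∩ L₁.toFinset = pgreedy I L₁ := by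
  refine Subset.antisymm (fun x hx => ?_)
    (subset_inter (pgreedy_subset_append L₁ L₂) (pgreedy_subset L₁))
  obtain ⟨hx, hx₁⟩ := mem_inter.1 hx
  rw [pgreedy_append] at hx
  rcases mem_union.1 (foldl_pgreedyStep_subset _ _ hx) with hx | hx₂
  · exact hx
  · exact absurd (List.mem_toFinset.1 hx₂)
      (List.disjoint_of_nodup_append h (List.mem_toFinset.1 hx₁))

end Greedy

theorem List.Nodup.countP_mem_eq_card_inter {α : Type*} [DecidableEq α] {L : List α}
    (hL : L.Nodup) (X : Finset α) : L.countP (· ∈ X) = #(X ∩ L.toFinset) := by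
  rw [List.countP_eq_length_filter, ← List.toFinset_card_of_nodup (hL.filter _),
    List.toFinset_filter, inter_comm]
  simp [filter_mem_eq_inter]

theorem List.Nodup.sum_map_filter_mem {α M : Type*} [DecidableEq α] [AddCommMonoid M]
    {L : List α} (hL : L.Nodup) {X : Finset α} (hX : ∀ x ∈ X, x ∈ L) (w : α → M) :
    ((L.filter (· ∈ X)).map w).sum = ∑ x ∈ X, w x := by
  rw [← List.sum_toFinset _ (hL.filter _), List.toFinset_filter]
  congr 1
  ext x
  simpa using fun hx => hX x hx

theorem IsUpset.inter {P : Type*} [PartialOrder P] [DecidableEq P] {S T : Finset P}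
    (hS : IsUpset S) (hT : IsUpset T) : IsUpset (S ∩ T) := fun _ hx _ hxy =>
  mem_inter.2 ⟨hS (mem_inter.1 hx).1 hxy, hT (mem_inter.1 hx).2 hxy⟩

namespace IsGreedyOrder

variable {P : Type*} [Fintype P] [PartialOrder P] [DecidableEq P] {w : P → ℝ} {l : List P}

theorem maxIn_of_eq_append_cons (hl : IsGreedyOrder w l) {L₁ R : List P} {y : P}
    (h : l = L₁ ++ y :: R) :
    MaxIn (y :: R).toFinset y ∧ ∀ z, MaxIn (y :: R).toFinset z → w z ≤ w y := by
  subst h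
  simpa [List.drop_left] using hl.2.2 L₁.length (by simp)

theorem mem_of_eq_append (hl : IsGreedyOrder w l) {L₁ L₂ : List P} (h : l = L₁ ++ L₂) {x : P}
    (hx : x ∉ L₁) : x ∈ L₂ :=
  (List.mem_append.1 (h ▸ hl.2.1 x)).resolve_left hx

theorem isUpset_of_eq_append (hl : IsGreedyOrder w l) {L R : List P} (h : l = L ++ R) :
    IsUpset L.toFinset := by
  intro x hx z hxz
  rw [List.mem_toFinset] at hx ⊢
  by_contra hz
  obtain ⟨L₁, L₂, rfl⟩ := List.append_of_mem hx
  have hmax := (hl.maxIn_of_eq_append_cons (L₁ := L₁) (R := L₂ ++ R) (y := x) (by simp [h])).1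
  have hzx := hmax.2 z (by simp [hl.mem_of_eq_append h hz]) hxz
  exact hz (hzx ▸ hx)

theorem pairwise_weight (hl : IsGreedyOrder w l) (hw : Monotone w) :
    l.Pairwise (fun a b => w b ≤ w a) :=
  List.pairwise_of_forall_eq_append_cons fun _ y _ h x hx => by
    obtain ⟨z, hxz, hz⟩ :=
      Finset.exists_le_maximal _ (List.mem_toFinset.2 (List.mem_cons_of_mem y hx))
    exact (hw hxz).trans ((hl.maxIn_of_eq_append_cons h).2 z (maxIn_of_maximal hz))

variable {I : Set (Finset P)}

theorem mem_pgreedy_of_insert_mem (hI : PosetMatroid I) (hl : IsGreedyOrder w l)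
    {L R : List P} (h : l = L ++ R) {y : P} (hy : y ∈ L)
    (hins : insert y (pgreedy I L) ∈ I) : y ∈ pgreedy I L := by
  obtain ⟨L₁, L₂, rfl⟩ := List.append_of_mem hy
  have hnd : (L₁ ++ y :: L₂).Nodup := (h ▸ hl.1).of_append_left
  have hsplit : l = L₁ ++ y :: (L₂ ++ R) := by simp [h]
  have hmax := (hl.maxIn_of_eq_append_cons hsplit).1
  have hup : IsUpset (insert y (pgreedy I L₁)) := by
    intro x hx z hxz
    rcases mem_insert.1 hx with rfl | hx
    · by_cases hzx : z = x
      · simp [hzx]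
      have hzS : z ∈ pgreedy I (L₁ ++ x :: L₂) :=
        (mem_insert.1 (hI.2.1 _ hins (mem_insert_self x _) hxz)).resolve_left hzx
      -- everything strictly above `x` was examined before `x`
      have hzL₁ : z ∈ L₁ := by
        by_contra hz
        exact hzx (hmax.2 z (List.mem_toFinset.2 (hl.mem_of_eq_append hsplit hz)) hxz)
      rw [← pgreedy_append_inter hnd]
      exact mem_insert_of_mem (mem_inter.2 ⟨hzS, List.mem_toFinset.2 hzL₁⟩)
    · exact mem_insert_of_mem (hI.2.1 _ (pgreedy_mem hI.empty_mem L₁) hx hxz)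
  have hmem : insert y (pgreedy I L₁) ∈ I :=
    hI.2.2.1 _ _ hins hup (insert_subset_insert y (pgreedy_subset_append _ _))
  rw [pgreedy_append, List.foldl_cons, pgreedyStep_eq_insert hmem]
  exact subset_foldl_pgreedyStep _ _ (mem_insert_self y _)

theorem card_inter_le_card_pgreedy (hI : PosetMatroid I) (hl : IsGreedyOrder w l)
    {L R : List P} (h : l = L ++ R) {A : Finset P} (hA : A ∈ I) :
    #(A ∩ L.toFinset) ≤ #(pgreedy I L) := by
  by_contra! hlt
  have hB : A ∩ L.toFinset ∈ I :=
    hI.2.2.1 _ A hA ((hI.2.1 A hA).inter (hl.isUpset_of_eq_append h)) inter_subset_left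
  obtain ⟨y, hy, hins⟩ := hI.2.2.2 _ (pgreedy_mem hI.empty_mem L) _ hB hlt
  obtain ⟨hyB, hyS⟩ := mem_sdiff.1 hy.1
  exact hyS (hl.mem_pgreedy_of_insert_mem hI h (List.mem_toFinset.1 (mem_inter.1 hyB).2) hins)

theorem countP_mem_le (hI : PosetMatroid I) (hl : IsGreedyOrder w l) {A : Finset P}
    (hA : A ∈ I) {L₁ L₂ : List P} (h : l = L₁ ++ L₂) :
    L₁.countP (· ∈ A) ≤ L₁.countP (· ∈ pgreedy I l) := by
  have hnd : (L₁ ++ L₂).Nodup := h ▸ hl.1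
  rw [hnd.of_append_left.countP_mem_eq_card_inter, hnd.of_append_left.countP_mem_eq_card_inter,
    h, pgreedy_append_inter hnd]
  exact hl.card_inter_le_card_pgreedy hI h hA

end IsGreedyOrder

/-- on a poset matroid, every output of PGREEDY with an
order-preserving nonnegative weight function achieves the maximum weight
over all independent sets. -/
theorem stmt19 {P : Type*} [Fintype P] [PartialOrder P] [DecidableEq P]
    (I : Set (Finset P)) (hI : PosetMatroid I)
    (w : P → ℝ) (hw0 : ∀ x, 0 ≤ w x) (hw : ∀ x y : P, x ≤ y → w x ≤ w y)
    (l : List P) (hl : IsGreedyOrder w l) :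
    pgreedy I l ∈ I ∧ ∀ A ∈ I, ∑ x ∈ A, w x ≤ ∑ x ∈ pgreedy I l, w x := by
  refine ⟨pgreedy_mem hI.empty_mem l, fun A hA => ?_⟩
  have hcover : ∀ X : Finset P, ∀ x ∈ X, x ∈ l := fun _ x _ => hl.2.1 x
  rw [← hl.1.sum_map_filter_mem (hcover A), ← hl.1.sum_map_filter_mem (hcover _)]
  exact sum_map_filter_le_of_countP_le w _ _ (fun x _ => hw0 x) (hl.pairwise_weight hw)
    fun _ _ h => hl.countP_mem_le hI hA h
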